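/- arXiv:2109.03424 — 3 statements merged into one kernel-verified Lean document; each statement's English description precedes it below -/
import Mathlib

section
/- Causality Property: Let F : ℝ² → [0,∞) be an asymmetric norm (subadditive, positively homogeneous, positive definite), let u, v ∈ ℝ² be linearly independent forming an F-acute angle, and let d_u, d_v ∈ ℝ. Define d_w = min over t ∈ [0,1] of t·d_u + (1−t)·d_v + F(t·u + (1−t)·v). If the minimum is not attained at t ∈ {0,1}, then d_u < d_w and d_v < d_w. -/
/-- Causality Property (Mirebeau). If `F` is an asymmetric norm on `ℝ²`,
`u, v` are linearly independent and form an `F`-acute angle, and the minimum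
`d_w = min_{t ∈ [0,1]} t d_u + (1−t) d_v + F(t u + (1−t) v)` is not attained
at `t ∈ {0,1}`, then `d_u < d_w` and `d_v < d_w`. -/
theorem causality_property (F : EuclideanSpace ℝ (Fin 2) → ℝ)
    (hF_nonneg : ∀ a, 0 ≤ F a)
    (hF_subadd : ∀ a b, F (a + b) ≤ F a + F b)
    (hF_homog : ∀ (l : ℝ), 0 ≤ l → ∀ a, F (l • a) = l * F a)
    (hF_posdef : ∀ a, F a = 0 ↔ a = 0)
    (u v : EuclideanSpace ℝ (Fin 2)) (h_indep : LinearIndependent ℝ ![u, v])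
    (h_acute : ∀ δ : ℝ, 0 ≤ δ → F u ≤ F (u + δ • v) ∧ F v ≤ F (v + δ • u))
    (du dv : ℝ) (t : ℝ) (ht : t ∈ Set.Ioo (0:ℝ) 1)
    (hmin : ∀ s ∈ Set.Icc (0:ℝ) 1,
      t * du + (1 - t) * dv + F (t • u + (1 - t) • v) ≤
        s * du + (1 - s) * dv + F (s • u + (1 - s) • v))
    (h0 : t * du + (1 - t) * dv + F (t • u + (1 - t) • v) <
      0 * du + (1 - 0) * dv + F ((0:ℝ) • u + (1 - 0) • v))
    (h1 : t * du + (1 - t) * dv + F (t • u + (1 - t) • v) <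
      1 * du + (1 - 1) * dv + F ((1:ℝ) • u + (1 - 1) • v)) :
    du < t * du + (1 - t) * dv + F (t • u + (1 - t) • v) ∧
    dv < t * du + (1 - t) * dv + F (t • u + (1 - t) • v) := by
  obtain ⟨ht0, ht1⟩ := ht
  have h1t : (0:ℝ) < 1 - t := by linarith
  set f := F (t • u + (1 - t) • v) with hf
  -- key1 : (1-t) * F v ≤ f
  have heq1 : (1 - t) • (v + (t / (1 - t)) • u) = t • u + (1 - t) • v := by
    rw [smul_add, smul_smul]
    have : (1 - t) * (t / (1 - t)) = t := by field_simp
    rw [this]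
    abel
  have key1 : (1 - t) * F v ≤ f := by
    rw [hf, ← heq1, hF_homog _ h1t.le]
    exact mul_le_mul_of_nonneg_left (h_acute (t / (1 - t)) (by positivity)).2 h1t.le
  have heq2 : t • (u + ((1 - t) / t) • v) = t • u + (1 - t) • v := by
    rw [smul_add, smul_smul]
    have : t * ((1 - t) / t) = 1 - t := by field_simp
    rw [this]
  have key2 : t * F u ≤ f := by
    rw [hf, ← heq2, hF_homog _ ht0.le]
    exact mul_le_mul_of_nonneg_left (h_acute ((1 - t) / t) (by positivity)).1 ht0.le
  norm_num at h0 h1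
  constructor
  · nlinarith [mul_lt_mul_of_pos_left h0 h1t]
  · nlinarith [mul_lt_mul_of_pos_left h1 ht0]
end

section
/- If F : ℝ² → [0,∞) is an asymmetric norm differentiable away from the origin, then unit-independent vectors u and v form an F-acute angle if and only if u · ∇F(v) ≥ 0 and v · ∇F(u) ≥ 0. -/
open scoped RealInnerProductSpace

/-!
An asymmetric norm is convex, being subadditive and positively homogeneous. For a convex function
differentiable at `x`, the ray condition `F x ≤ F (x + δ • w)` for all `δ ≥ 0` is equivalent to
`0 ≤ ⟪∇F x, w⟫`: necessity is Fermat's rule at a one-sided minimum, sufficiency is the first-order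
inequality `F x + ⟪∇F x, y - x⟫ ≤ F y` of a convex function.
-/

open Set

theorem convexOn_univ_of_subadditive_of_homogeneous {E : Type*} [AddCommGroup E] [Module ℝ E]
    {f : E → ℝ} (hadd : ∀ a b, f (a + b) ≤ f a + f b)
    (hsmul : ∀ (l : ℝ), 0 ≤ l → ∀ a, f (l • a) = l * f a) :
    ConvexOn ℝ univ f :=
  ⟨convex_univ, fun a _ b _ s t hs ht _ => by
    simpa only [hsmul s hs, hsmul t ht, smul_eq_mul] using hadd (s • a) (t • b)⟩

section

variable {E : Type*} [NormedAddCommGroup E] [NormedSpace ℝ E] {f : E → ℝ} {f' : E →L[ℝ] ℝ}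
  {x : E}

theorem ConvexOn.add_fderiv_sub_le {s : Set E} {y : E} (hf : ConvexOn ℝ s f) (hx : x ∈ s)
    (hy : y ∈ s) (hf' : HasFDerivAt f f' x) :
    f x + f' (y - x) ≤ f y := by
  set φ : ℝ → ℝ := f ∘ AffineMap.lineMap x y
  have hconv : ConvexOn ℝ (Icc 0 1) φ :=
    (hf.comp_affineMap (AffineMap.lineMap x y)).subset
      (fun t ht => hf.1.segment_subset hx hy
        (segment_eq_image_lineMap ℝ x y ▸ mem_image_of_mem _ ht))
      (convex_Icc 0 1)
  have hderiv : HasDerivAt φ (f' (y - x)) 0 :=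
    (AffineMap.lineMap_apply_zero (k := ℝ) x y ▸ hf').comp_hasDerivAt 0 AffineMap.hasDerivAt_lineMap
  have := hconv.le_slope_of_hasDerivAt (left_mem_Icc.2 zero_le_one) (right_mem_Icc.2 zero_le_one)
    zero_lt_one hderiv
  simpa only [slope_def_field, φ, Function.comp_apply, AffineMap.lineMap_apply_zero,
    AffineMap.lineMap_apply_one, sub_zero, div_one, le_sub_iff_add_le'] using this

theorem HasFDerivAt.nonneg_of_forall_le_add_smul {w : E} (hf' : HasFDerivAt f f' x)
    (h : ∀ δ : ℝ, 0 ≤ δ → f x ≤ f (x + δ • w)) : 0 ≤ f' w :=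
  -- `x` minimizes `f` on `{y | f x ≤ f y}`, which contains the ray, so `w` is tangent to it.
  IsLocalMinOn.hasFDerivWithinAt_nonneg (s := {y | f x ≤ f y}) (IsMinOn.localize fun _ hy => hy)
    hf'.hasFDerivWithinAt <| mem_posTangentConeAt_of_frequently_mem <|
      (eventually_nhdsWithin_of_forall (s := Ioi (0 : ℝ)) fun t ht => h t (le_of_lt ht)).frequently

theorem ConvexOn.forall_le_add_smul_iff {w : E} (hf : ConvexOn ℝ univ f)
    (hf' : HasFDerivAt f f' x) :
    (∀ δ : ℝ, 0 ≤ δ → f x ≤ f (x + δ • w)) ↔ 0 ≤ f' w := by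
  refine ⟨hf'.nonneg_of_forall_le_add_smul, fun hw δ hδ => ?_⟩
  have := hf.add_fderiv_sub_le (mem_univ x) (mem_univ (x + δ • w)) hf'
  rw [add_sub_cancel_left, map_smul, smul_eq_mul] at this
  exact le_trans (le_add_of_nonneg_right (mul_nonneg hδ hw)) this

end

theorem acute_iff_gradient_general (F : EuclideanSpace ℝ (Fin 2) → ℝ)
    (g : EuclideanSpace ℝ (Fin 2) → EuclideanSpace ℝ (Fin 2))
    (hF_subadd : ∀ a b, F (a + b) ≤ F a + F b)
    (hF_homog : ∀ (l : ℝ), 0 ≤ l → ∀ a, F (l • a) = l * F a)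
    (hF_diff : ∀ a : EuclideanSpace ℝ (Fin 2), a ≠ 0 → HasGradientAt F (g a) a)
    (u v : EuclideanSpace ℝ (Fin 2)) (hu : ‖u‖ = 1) (hv : ‖v‖ = 1) :
    (∀ δ : ℝ, 0 ≤ δ → F u ≤ F (u + δ • v) ∧ F v ≤ F (v + δ • u)) ↔
      (0 ≤ ⟪u, g v⟫ ∧ 0 ≤ ⟪v, g u⟫) := by
  have hconv := convexOn_univ_of_subadditive_of_homogeneous hF_subadd hF_homog
  have ray_iff (x w : EuclideanSpace ℝ (Fin 2)) (hx : ‖x‖ = 1) :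
      (∀ δ : ℝ, 0 ≤ δ → F x ≤ F (x + δ • w)) ↔ 0 ≤ ⟪w, g x⟫ := by
    rw [real_inner_comm, ← InnerProductSpace.toDual_apply_apply]
    exact hconv.forall_le_add_smul_iff <| hasGradientAt_iff_hasFDerivAt.mp <|
      hF_diff x (norm_ne_zero_iff.mp (hx ▸ one_ne_zero))
  rw [forall₂_and, ray_iff u v hu, ray_iff v u hv, and_comm]

/-- If `F : ℝ² → [0,∞)` is an asymmetric norm differentiable away from the
origin, then linearly independent unit vectors `u` and `v` form an `F`-acute
angle iff `u · ∇F(v) ≥ 0` and `v · ∇F(u) ≥ 0`. -/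
theorem acute_iff_gradient (F : EuclideanSpace ℝ (Fin 2) → ℝ)
    (g : EuclideanSpace ℝ (Fin 2) → EuclideanSpace ℝ (Fin 2))
    (hF_nonneg : ∀ a, 0 ≤ F a)
    (hF_subadd : ∀ a b, F (a + b) ≤ F a + F b)
    (hF_homog : ∀ (l : ℝ), 0 ≤ l → ∀ a, F (l • a) = l * F a)
    (hF_posdef : ∀ a, F a = 0 ↔ a = 0)
    (hF_diff : ∀ a : EuclideanSpace ℝ (Fin 2), a ≠ 0 → HasGradientAt F (g a) a)
    (u v : EuclideanSpace ℝ (Fin 2)) (hu : ‖u‖ = 1) (hv : ‖v‖ = 1)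
    (h_indep : LinearIndependent ℝ ![u, v]) :
    (∀ δ : ℝ, 0 ≤ δ → F u ≤ F (u + δ • v) ∧ F v ≤ F (v + δ • u)) ↔
      (0 ≤ ⟪u, g v⟫ ∧ 0 ≤ ⟪v, g u⟫) :=
  acute_iff_gradient_general F g hF_subadd hF_homog hF_diff u v hu hv
end

section
/- For the drift field b(x,y) = −(1/2)(4x+3x², 2y) + (a/2)(−2y, 4x+3x²), the function U(x,y) = 2x² + x³ + y² satisfies the orthogonal decomposition b = −(1/2)∇U + ℓ with ℓ·∇U = 0 everywhere, and consequently U solves the HJB equation b·∇U + (1/2)‖∇U‖² = 0. -/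
/-!
The gradient of `U` is `g = (4x + 3x², 2y)` and the drift is `b = -(1/2) g + (a/2) J g`, where
`J (g₁, g₂) = (-g₂, g₁)` is the rotation by a right angle. Hence `ℓ = b + (1/2) g = (a/2) J g` is
orthogonal to `g`, and `b·g + (1/2)‖g‖² = (b + (1/2) g)·g = ℓ·g = 0`.
-/

section DriftAlgebra

variable {K : Type*} [Field K]

theorem rotation_dot_self_eq_zero (c g₁ g₂ : K) : c * -g₂ * g₁ + c * g₁ * g₂ = 0 := by
  ring

theorem dot_add_half_sq_eq_add_half_dot (b₁ b₂ g₁ g₂ : K) :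
    b₁ * g₁ + b₂ * g₂ + 1 / 2 * (g₁ ^ 2 + g₂ ^ 2) =
      (b₁ + 1 / 2 * g₁) * g₁ + (b₂ + 1 / 2 * g₂) * g₂ := by
  ring

theorem add_half_dot_eq_zero_of_eq_neg_half_add_rotation {c b₁ b₂ g₁ g₂ : K}
    (h₁ : b₁ = -(1 / 2) * g₁ + c * -g₂) (h₂ : b₂ = -(1 / 2) * g₂ + c * g₁) :
    (b₁ + 1 / 2 * g₁) * g₁ + (b₂ + 1 / 2 * g₂) * g₂ = 0 := by
  rw [h₁, h₂, ← rotation_dot_self_eq_zero c g₁ g₂]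
  ring

end DriftAlgebra

theorem deriv_two_mul_sq_add_cube_add_const (c x : ℝ) :
    deriv (fun t : ℝ => 2 * t ^ 2 + t ^ 3 + c) x = 4 * x + 3 * x ^ 2 := by
  have h : HasDerivAt (fun t : ℝ => 2 * t ^ 2 + t ^ 3 + c) (2 * (2 * x) + 3 * x ^ 2) x := by
    simpa using (((hasDerivAt_pow 2 x).const_mul 2).add (hasDerivAt_pow 3 x)).add_const c
  rw [h.deriv]
  ring

theorem deriv_const_add_sq (c y : ℝ) : deriv (fun t : ℝ => c + t ^ 2) y = 2 * y := by
  rw [((hasDerivAt_pow 2 y).const_add c).deriv]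
  ring

/-- For the drift `b = −(1/2)(4x+3x², 2y) + (a/2)(−2y, 4x+3x²)`, the function
`U(x,y) = 2x² + x³ + y²` has gradient `(4x+3x², 2y)`, the decomposition
`b = −(1/2)∇U + ℓ` is orthogonal (`ℓ·∇U = 0`), and `U` solves the HJB equation
`b·∇U + (1/2)‖∇U‖² = 0`. -/
theorem nonlinear_drift_orthogonal_decomposition (a : ℝ)
    (b₁ b₂ U g₁ g₂ : ℝ → ℝ → ℝ)
    (hb₁ : ∀ x y, b₁ x y = -(1/2) * (4 * x + 3 * x ^ 2) + (a / 2) * (-2 * y))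
    (hb₂ : ∀ x y, b₂ x y = -(1/2) * (2 * y) + (a / 2) * (4 * x + 3 * x ^ 2))
    (hU : ∀ x y, U x y = 2 * x ^ 2 + x ^ 3 + y ^ 2)
    (hg₁ : ∀ x y, g₁ x y = 4 * x + 3 * x ^ 2)
    (hg₂ : ∀ x y, g₂ x y = 2 * y) :
    (∀ x y : ℝ, deriv (fun t => U t y) x = g₁ x y ∧
      deriv (fun t => U x t) y = g₂ x y) ∧
    (∀ x y : ℝ,
      b₁ x y = -(1/2) * g₁ x y + (b₁ x y + (1/2) * g₁ x y) ∧
      b₂ x y = -(1/2) * g₂ x y + (b₂ x y + (1/2) * g₂ x y) ∧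
      (b₁ x y + (1/2) * g₁ x y) * g₁ x y + (b₂ x y + (1/2) * g₂ x y) * g₂ x y = 0) ∧
    (∀ x y : ℝ,
      b₁ x y * g₁ x y + b₂ x y * g₂ x y
        + (1/2) * ((g₁ x y) ^ 2 + (g₂ x y) ^ 2) = 0) := by
  have gradient : ∀ x y, deriv (fun t => U t y) x = g₁ x y ∧ deriv (fun t => U x t) y = g₂ x y := by
    intro x y
    simp only [hU, hg₁, hg₂]
    exact ⟨deriv_two_mul_sq_add_cube_add_const _ x, deriv_const_add_sq (2 * x ^ 2 + x ^ 3) y⟩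
  have orthogonal : ∀ x y,
      (b₁ x y + 1 / 2 * g₁ x y) * g₁ x y + (b₂ x y + 1 / 2 * g₂ x y) * g₂ x y = 0 := by
    intro x y
    refine add_half_dot_eq_zero_of_eq_neg_half_add_rotation (c := a / 2) ?_ ?_
    · rw [hb₁, hg₁, hg₂]; ring
    · rw [hb₂, hg₁, hg₂]
  refine ⟨gradient, fun x y => ⟨by ring, by ring, orthogonal x y⟩, fun x y => ?_⟩
  rw [dot_add_half_sq_eq_add_half_dot, orthogonal]
end
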